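/- arXiv:1603.08797 — 6 statements merged into one kernel-verified Lean document; each statement's English description precedes it below -/
import Mathlib

section
/- For every g ∈ SL(2,ℝ) and every nonzero v ∈ ℝ², one has (1/(2π)) ∫₀^{2π} ‖g k_θ v‖⁻¹ dθ = Ξ(g) · ‖v‖⁻¹. (This is the spherical identity (1/vol K)∫_K Ξ_{G/N}(gkx) dk = Ξ_G(g)·Ξ_{G/N}(x) for the homogeneous space G/N̄, transported to ℝ²∖{0} via gN̄ ↦ g e₂, under which Ξ_{G/N̄} becomes v ↦ ‖v‖⁻¹.) -/
open Matrix MeasureTheory Real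

noncomputable section

/-- `SL(2,ℝ)`. -/
abbrev SL2 := Matrix.SpecialLinearGroup (Fin 2) ℝ

/-- The rotation matrix `k_θ ∈ SO(2)`. -/
def rot (θ : ℝ) : Matrix (Fin 2) (Fin 2) ℝ :=
  !![Real.cos θ, -Real.sin θ; Real.sin θ, Real.cos θ]

/-- The vector `e₂ = (0,1)`. -/
def e2 : Fin 2 → ℝ := ![0, 1]

/-- The Euclidean norm on `ℝ²`. -/
def en (v : Fin 2 → ℝ) : ℝ := Real.sqrt (v 0 ^ 2 + v 1 ^ 2)

/-- The Harish-Chandra `Ξ`-function of `SL(2,ℝ)`: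
`Ξ(g) = (1/(2π)) ∫₀^{2π} ‖g k_θ e₂‖⁻¹ dθ`. -/
def Xi (g : Matrix (Fin 2) (Fin 2) ℝ) : ℝ :=
  (1 / (2 * Real.pi)) * ∫ θ in (0:ℝ)..(2 * Real.pi), (en ((g * rot θ).mulVec e2))⁻¹

/-- The operator norm of a `2 × 2` real matrix acting on Euclidean `ℝ²`. -/
def opNorm (g : Matrix (Fin 2) (Fin 2) ℝ) : ℝ :=
  ‖LinearMap.toContinuousLinearMap (Matrix.toEuclideanLin g)‖

lemma rot_mul (a b : ℝ) : rot a * rot b = rot (a + b) := by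
  ext i j
  fin_cases i <;> fin_cases j <;>
    simp [rot, Matrix.mul_apply, Fin.sum_univ_two, Real.cos_add, Real.sin_add] <;> ring

lemma rot_periodic (θ : ℝ) : rot (θ + 2 * Real.pi) = rot θ := by
  simp [rot, Real.cos_add_two_pi, Real.sin_add_two_pi]

lemma en_smul (r : ℝ) (hr : 0 ≤ r) (w : Fin 2 → ℝ) : en (r • w) = r * en w := by
  simp only [en, Pi.smul_apply, smul_eq_mul, mul_pow]
  rw [← mul_add, Real.sqrt_mul (by positivity), Real.sqrt_sq hr]

/-- The spherical identity for the homogeneous space `G/N̄ ≅ ℝ²∖{0}`: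
for every `g ∈ SL(2,ℝ)` and every nonzero `v ∈ ℝ²`,
`(1/(2π)) ∫₀^{2π} ‖g k_θ v‖⁻¹ dθ = Ξ(g)·‖v‖⁻¹`. -/
theorem Xi_GmodN_spherical (g : SL2) (v : Fin 2 → ℝ) (hv : v ≠ 0) :
    (1 / (2 * Real.pi)) * ∫ θ in (0:ℝ)..(2 * Real.pi),
        (en (((g : Matrix (Fin 2) (Fin 2) ℝ) * rot θ).mulVec v))⁻¹
      = Xi g * (en v)⁻¹ := by
  -- the complex number (v 1) - (v 0) i
  set z : ℂ := ⟨v 1, -(v 0)⟩ with hzdef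
  have hz : z ≠ 0 := by
    intro h
    apply hv
    have h1 : v 1 = 0 := congrArg Complex.re h
    have h0 : -(v 0) = 0 := congrArg Complex.im h
    funext i
    fin_cases i
    · simpa using (neg_eq_zero.mp h0)
    · simpa using h1
  have habs : ‖z‖ = en v := by
    rw [Complex.norm_def, Complex.normSq_apply, en]
    simp [hzdef]
    ring_nf
  have hen : 0 < en v := by
    rw [← habs]; exact norm_pos_iff.mpr hz
  set φ := z.arg with hφdef
  have hcos : Real.cos φ = v 1 / en v := by
    rw [hφdef, Complex.cos_arg hz, habs]
  have hsin : Real.sin φ = -(v 0) / en v := by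
    rw [hφdef, Complex.sin_arg, habs]
  have hveq : v = (en v) • (rot φ).mulVec e2 := by
    funext i
    fin_cases i <;>
      simp [rot, e2, Matrix.mulVec, dotProduct, Fin.sum_univ_two, hcos, hsin,
        mul_div_cancel₀, div_eq_iff hen.ne'] <;> field_simp
  have hpt : ∀ θ : ℝ, (en (((g : Matrix (Fin 2) (Fin 2) ℝ) * rot θ).mulVec v))⁻¹
      = (en v)⁻¹ * (en (((g : Matrix (Fin 2) (Fin 2) ℝ) * rot (θ + φ)).mulVec e2))⁻¹ := by
    intro θ
    conv_lhs => rw [hveq]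
    rw [Matrix.mulVec_smul, Matrix.mulVec_mulVec, mul_assoc, rot_mul,
      en_smul _ hen.le, mul_inv]
  simp_rw [hpt]
  rw [intervalIntegral.integral_const_mul]
  have hper : Function.Periodic
      (fun θ => (en (((g : Matrix (Fin 2) (Fin 2) ℝ) * rot θ).mulVec e2))⁻¹) (2 * Real.pi) := by
    intro θ; simp [rot_periodic]
  have hshift : (∫ θ in (0:ℝ)..(2 * Real.pi),
      (en (((g : Matrix (Fin 2) (Fin 2) ℝ) * rot (θ + φ)).mulVec e2))⁻¹)
      = ∫ θ in (0:ℝ)..(2 * Real.pi),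
      (en (((g : Matrix (Fin 2) (Fin 2) ℝ) * rot θ).mulVec e2))⁻¹ := by
    rw [intervalIntegral.integral_comp_add_right
      (fun θ => (en (((g : Matrix (Fin 2) (Fin 2) ℝ) * rot θ).mulVec e2))⁻¹) φ]
    have := hper.intervalIntegral_add_eq φ 0
    simpa [add_comm, zero_add] using this
  rw [hshift, Xi]
  ring
end
end

section
/- For every real α > 0, the infimum over x ∈ ℝ of the operator norm of the matrix [[α, αx],[0, α⁻¹]] (acting on Euclidean ℝ²) equals max(α, α⁻¹). (This justifies the explicit formula ‖gN‖ = ‖a‖ for the Harish-Chandra scale on G/N: if g = kan in the Iwasawa decomposition, then inf_{n∈N} ‖gn‖ = ‖a‖.) -/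
open Matrix MeasureTheory Real

noncomputable section

lemma norm_apply' (g : Matrix (Fin 2) (Fin 2) ℝ) (v : Fin 2 → ℝ) :
    ‖LinearMap.toContinuousLinearMap (Matrix.toEuclideanLin g)
      ((WithLp.equiv 2 (Fin 2 → ℝ)).symm v)‖
    = Real.sqrt ((g.mulVec v 0)^2 + (g.mulVec v 1)^2) := by
  rw [LinearMap.coe_toContinuousLinearMap', WithLp.equiv_symm_apply, Matrix.toEuclideanLin_apply_piLp_toLp]
  rw [EuclideanSpace.norm_eq]
  simp [Fin.sum_univ_two, sq_abs]

lemma norm_symm' (v : Fin 2 → ℝ) :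
    ‖(WithLp.equiv 2 (Fin 2 → ℝ)).symm v‖ = Real.sqrt (v 0 ^2 + v 1 ^2) := by
  rw [EuclideanSpace.norm_eq]; simp [Fin.sum_univ_two, sq_abs]

lemma lb (α : ℝ) (hα : 0 < α) (x : ℝ) : max α α⁻¹ ≤ opNorm !![α, α * x; 0, α⁻¹] := by
  set f := LinearMap.toContinuousLinearMap (Matrix.toEuclideanLin !![α, α * x; 0, α⁻¹])
  apply max_le
  · have h := f.le_opNorm ((WithLp.equiv 2 (Fin 2 → ℝ)).symm ![1, 0])
    rw [norm_apply', norm_symm'] at h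
    have hm : (!![α, α * x; 0, α⁻¹]).mulVec ![1, 0] = ![α, 0] := by
      funext i; fin_cases i <;> simp [Matrix.mulVec, dotProduct, Fin.sum_univ_two]
    rw [hm] at h
    simp only [Matrix.cons_val_zero, Matrix.cons_val_one, Matrix.head_cons] at h
    rw [show (1:ℝ)^2 + 0^2 = 1 by ring, Real.sqrt_one, mul_one] at h
    calc α = Real.sqrt (α ^ 2 + 0 ^ 2) := by
              rw [show α^2 + 0^2 = α^2 by ring, Real.sqrt_sq hα.le]
      _ ≤ _ := h
  · have h := f.le_opNorm ((WithLp.equiv 2 (Fin 2 → ℝ)).symm ![0, 1])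
    rw [norm_apply', norm_symm'] at h
    have hm : (!![α, α * x; 0, α⁻¹]).mulVec ![0, 1] = ![α * x, α⁻¹] := by
      funext i; fin_cases i <;> simp [Matrix.mulVec, dotProduct, Fin.sum_univ_two]
    rw [hm] at h
    simp only [Matrix.cons_val_zero, Matrix.cons_val_one, Matrix.head_cons] at h
    calc α⁻¹ = Real.sqrt ((α⁻¹) ^ 2) := (Real.sqrt_sq (by positivity)).symm
      _ ≤ Real.sqrt ((α * x) ^ 2 + (α⁻¹) ^ 2) := Real.sqrt_le_sqrt (by nlinarith [sq_nonneg (α*x)])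
      _ ≤ _ := by
              rw [show (0:ℝ)^2 + 1^2 = 1 by ring, Real.sqrt_one, mul_one] at h
              exact h

lemma ub (α : ℝ) (hα : 0 < α) : opNorm !![α, α * 0; 0, α⁻¹] ≤ max α α⁻¹ := by
  apply ContinuousLinearMap.opNorm_le_bound _ (le_max_of_le_left hα.le)
  intro v
  obtain ⟨w, rfl⟩ : ∃ w, (WithLp.equiv 2 (Fin 2 → ℝ)).symm w = v :=
    ⟨WithLp.equiv 2 (Fin 2 → ℝ) v, rfl⟩
  rw [norm_apply', norm_symm']
  have hm : (!![α, α * 0; 0, α⁻¹]).mulVec w = ![α * w 0, α⁻¹ * w 1] := by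
    funext i; fin_cases i <;> simp [Matrix.mulVec, dotProduct, Fin.sum_univ_two, Matrix.vecHead, Matrix.vecTail]
  rw [hm]
  simp only [Matrix.cons_val_zero, Matrix.cons_val_one, Matrix.head_cons]
  set M := max α α⁻¹ with hM
  have hM0 : 0 < M := lt_max_of_lt_left hα
  have h1 : α ≤ M := le_max_left _ _
  have h2 : α⁻¹ ≤ M := le_max_right _ _
  rw [← Real.sqrt_sq hM0.le, ← Real.sqrt_mul (by positivity)]
  apply Real.sqrt_le_sqrt
  have hi : 0 < α⁻¹ := by positivity
  nlinarith [sq_nonneg (w 0), sq_nonneg (w 1), mul_le_mul h1 h1 hα.le hM0.le,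
    mul_le_mul h2 h2 hi.le hM0.le]

/-- For `α > 0`, the infimum over `x ∈ ℝ` of the operator norm of `[[α, αx],[0,α⁻¹]]`
equals `max(α, α⁻¹)`; i.e. `inf_{n ∈ N} ‖an‖ = ‖a‖`. -/
theorem inf_opNorm_eq_max (α : ℝ) (hα : 0 < α) :
    (⨅ x : ℝ, opNorm !![α, α * x; 0, α⁻¹]) = max α α⁻¹ := by
  apply le_antisymm
  · exact le_trans (ciInf_le ⟨0, fun y ⟨x, hx⟩ => hx ▸ norm_nonneg _⟩ 0) (ub α hα)
  · exact le_ciInf (lb α hα)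
end
end

section
/- For every real t and every real p > 1, the function x ↦ (e^{−2t} + x²e^{2t})^{−1/2} · (1 + (1/2)·|log(e^{−2t} + x²e^{2t})|)^{−p} is integrable on ℝ. -/
open MeasureTheory Real

open Set Filter Topology in
lemma aux_G_integrable {p : ℝ} (hp : 1 < p) :
    IntegrableOn (fun x : ℝ => (1 + Real.log x) ^ (-p) * x⁻¹) (Ioi 1) := by
  have h1p : (1 : ℝ) - p ≠ 0 := by linarith
  have hderiv : ∀ x ∈ Ici (1:ℝ), HasDerivAt
      (fun y : ℝ => (1 + Real.log y) ^ (1 - p) / (1 - p))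
      ((1 + Real.log x) ^ (-p) * x⁻¹) x := by
    intro x hx
    have hx0 : (0:ℝ) < x := lt_of_lt_of_le one_pos hx
    have hlog : (0:ℝ) < 1 + Real.log x := by
      have : (0:ℝ) ≤ Real.log x := Real.log_nonneg hx
      linarith
    have h1 : HasDerivAt (fun y : ℝ => 1 + Real.log y) x⁻¹ x :=
      (Real.hasDerivAt_log hx0.ne').const_add 1
    have h2 := (HasDerivAt.rpow_const (p := 1 - p) h1 (Or.inl hlog.ne')).div_const (1 - p)
    refine h2.congr_deriv ?_
    have : (1:ℝ) - p - 1 = -p := by ring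
    rw [this]
    field_simp
  have hpos : ∀ x ∈ Ici (1:ℝ), 0 ≤ (1 + Real.log x) ^ (-p) * x⁻¹ := by
    intro x hx
    have hx0 : (0:ℝ) < x := lt_of_lt_of_le one_pos hx
    have hlog : (0:ℝ) ≤ 1 + Real.log x := by
      have := Real.log_nonneg hx; linarith
    positivity
  have htend : Tendsto (fun y : ℝ => (1 + Real.log y) ^ (1 - p) / (1 - p)) atTop (𝓝 0) := by
    have h1 : Tendsto (fun y : ℝ => 1 + Real.log y) atTop atTop :=
      tendsto_atTop_add_const_left _ 1 Real.tendsto_log_atTop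
    have h2 : Tendsto (fun z : ℝ => z ^ (-(p-1))) atTop (𝓝 0) :=
      tendsto_rpow_neg_atTop (by linarith)
    have h3 : Tendsto (fun y : ℝ => (1 + Real.log y) ^ (1 - p)) atTop (𝓝 0) := by
      have : (fun y : ℝ => (1 + Real.log y) ^ (1 - p)) =
          (fun z : ℝ => z ^ (-(p-1))) ∘ (fun y => 1 + Real.log y) := by
        funext y; simp [neg_sub]
      rw [this]
      exact h2.comp h1
    simpa using h3.div_const (1 - p)
  exact integrableOn_Ioi_deriv_of_nonneg'
    (fun x hx => hderiv x hx) (fun x hx => hpos x (Ioi_subset_Ici_self hx)) htend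

open Set Filter Topology in

/-- Integrability of the bound controlling the standard intertwining integral: for every
`t ∈ ℝ` and `p > 1`, the function
`x ↦ (e^{-2t}+x²e^{2t})^{-1/2} · (1 + ½|log(e^{-2t}+x²e^{2t})|)^{-p}` is integrable on `ℝ`. -/
theorem intertwining_bound_integrable (t p : ℝ) (hp : 1 < p) :
    Integrable (fun x : ℝ =>
      (Real.exp (-(2*t)) + x ^ 2 * Real.exp (2*t)) ^ (-(1/2 : ℝ)) *
        (1 + (1/2) * |Real.log (Real.exp (-(2*t)) + x ^ 2 * Real.exp (2*t))|) ^ (-p)) := by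
  set f : ℝ → ℝ := fun x =>
      (Real.exp (-(2*t)) + x ^ 2 * Real.exp (2*t)) ^ (-(1/2 : ℝ)) *
        (1 + (1/2) * |Real.log (Real.exp (-(2*t)) + x ^ 2 * Real.exp (2*t))|) ^ (-p) with hf
  have hs : ∀ x : ℝ, 0 < Real.exp (-(2*t)) + x ^ 2 * Real.exp (2*t) := by
    intro x; positivity
  have hb : ∀ x : ℝ,
      0 < 1 + (1/2) * |Real.log (Real.exp (-(2*t)) + x ^ 2 * Real.exp (2*t))| := by
    intro x
    have := abs_nonneg (Real.log (Real.exp (-(2*t)) + x ^ 2 * Real.exp (2*t)))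
    linarith
  have hfpos : ∀ x, 0 < f x := by
    intro x
    have h1 := hs x; have h2 := hb x
    positivity
  -- continuity
  have hcs : Continuous fun x : ℝ => Real.exp (-(2*t)) + x ^ 2 * Real.exp (2*t) := by
    continuity
  have hcont : Continuous f := by
    apply Continuous.mul
    · exact hcs.rpow_const fun x => Or.inl (hs x).ne'
    · refine Continuous.rpow_const ?_ fun x => Or.inl (hb x).ne'
      exact continuous_const.add
        (continuous_const.mul (hcs.log fun x => (hs x).ne').abs)
  -- evenness
  have heven : ∀ x : ℝ, f (-x) = f x := by
    intro x
    have h : (-x) ^ 2 = x ^ 2 := by ring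
    simp only [hf, h]
  -- bound on (1, ∞)
  set C : ℝ := Real.exp (-t) * (1 + |t|) ^ p with hC
  have hbound : ∀ x : ℝ, 1 < x → f x ≤ C * ((1 + Real.log x) ^ (-p) * x⁻¹) := by
    intro x hx
    have hx0 : (0:ℝ) < x := lt_trans one_pos hx
    set s := Real.exp (-(2*t)) + x ^ 2 * Real.exp (2*t) with hsdef
    set L := Real.log s with hLdef
    have hm : x ^ 2 * Real.exp (2*t) ≤ s := by
      have := Real.exp_pos (-(2*t)); simp [hsdef]; linarith
    have hmpos : (0:ℝ) < x ^ 2 * Real.exp (2*t) := by positivity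
    -- first factor
    have hA : s ^ (-(1/2 : ℝ)) ≤ Real.exp (-t) * x⁻¹ := by
      have h1 : s ^ (-(1/2 : ℝ)) ≤ (x ^ 2 * Real.exp (2*t)) ^ (-(1/2 : ℝ)) :=
        Real.rpow_le_rpow_of_nonpos hmpos hm (by norm_num)
      have h2 : (x ^ 2 * Real.exp (2*t)) ^ (-(1/2 : ℝ)) = Real.exp (-t) * x⁻¹ := by
        have hy : x ^ 2 * Real.exp (2*t) = (x * Real.exp t) ^ 2 := by
          rw [two_mul, Real.exp_add]; ring
        have hy0 : (0:ℝ) < x * Real.exp t := by positivity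
        rw [hy, ← Real.rpow_natCast (x * Real.exp t) 2, ← Real.rpow_mul hy0.le]
        norm_num
        rw [Real.rpow_neg_one, mul_inv, Real.exp_neg, mul_comm]
      rw [← h2]; exact h1
    -- second factor
    have hlogx : (0:ℝ) < 1 + Real.log x := by
      have := Real.log_nonneg hx.le; linarith
    have hL : 2 * Real.log x + 2 * t ≤ L := by
      have h1 : Real.log (x ^ 2 * Real.exp (2*t)) ≤ L :=
        Real.log_le_log hmpos hm
      rw [Real.log_mul (by positivity) (Real.exp_ne_zero _), Real.log_exp,
        Real.log_pow] at h1
      push_cast at h1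
      linarith
    have hkey : 1 + Real.log x ≤ (1 + |t|) * (1 + (1/2) * |L|) := by
      have ht1 : t ≤ |t| := le_abs_self t
      have ht2 : -|t| ≤ t := neg_abs_le t
      have habs : (0:ℝ) ≤ |L| := abs_nonneg L
      rcases le_or_gt 0 L with hL0 | hL0
      · rw [abs_of_nonneg hL0] at habs ⊢
        nlinarith
      · have hlx : Real.log x < -t := by linarith
        nlinarith
    have hB : (1 + (1/2) * |L|) ^ (-p) ≤ (1 + |t|) ^ p * (1 + Real.log x) ^ (-p) := by
      have hb' : (0:ℝ) < 1 + (1/2) * |L| := hb x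
      have ht0 : (0:ℝ) < 1 + |t| := by have := abs_nonneg t; linarith
      have h1 : ((1 + |t|) * (1 + (1/2) * |L|)) ^ (-p) ≤ (1 + Real.log x) ^ (-p) :=
        Real.rpow_le_rpow_of_nonpos hlogx hkey (by linarith)
      have h2 : ((1 + |t|) * (1 + (1/2) * |L|)) ^ (-p)
          = (1 + |t|) ^ (-p) * (1 + (1/2) * |L|) ^ (-p) :=
        Real.mul_rpow ht0.le hb'.le
      have h3 : (1 + (1/2) * |L|) ^ (-p)
          = (1 + |t|) ^ p * (((1 + |t|) * (1 + (1/2) * |L|)) ^ (-p)) := by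
        rw [h2, ← mul_assoc, ← Real.rpow_add ht0]
        simp
      rw [h3]
      exact mul_le_mul_of_nonneg_left h1 (Real.rpow_nonneg ht0.le p)
    calc f x = s ^ (-(1/2 : ℝ)) * (1 + (1/2) * |L|) ^ (-p) := rfl
      _ ≤ (Real.exp (-t) * x⁻¹) * ((1 + |t|) ^ p * (1 + Real.log x) ^ (-p)) := by
          apply mul_le_mul hA hB (Real.rpow_nonneg (hb x).le _)
          positivity
      _ = C * ((1 + Real.log x) ^ (-p) * x⁻¹) := by rw [hC]; ring
  -- integrability on pieces
  have hIoi : IntegrableOn f (Ioi 1) := by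
    have hG : IntegrableOn (fun x : ℝ => C * ((1 + Real.log x) ^ (-p) * x⁻¹)) (Ioi 1) :=
      (aux_G_integrable hp).const_mul C
    refine hG.mono' (hcont.aestronglyMeasurable.restrict) ?_
    filter_upwards [ae_restrict_mem measurableSet_Ioi] with x hx
    rw [Real.norm_eq_abs, abs_of_nonneg (hfpos x).le]
    exact hbound x hx
  have hIio : IntegrableOn f (Iio (-1 : ℝ)) := by
    have h1 : IntegrableOn (f ∘ Neg.neg) (Neg.neg ⁻¹' (Ioi (1:ℝ))) :=
      (MeasurePreserving.integrableOn_comp_preimage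
        (Measure.measurePreserving_neg (volume : Measure ℝ))
        (Homeomorph.neg ℝ).measurableEmbedding).2 hIoi
    have h2 : (Neg.neg ⁻¹' (Ioi (1:ℝ)) : Set ℝ) = Iio (-1) := by
      ext y; simp [lt_neg]
    have h3 : f ∘ Neg.neg = f := by funext y; exact heven y
    rwa [h2, h3] at h1
  have hIcc : IntegrableOn f (Icc (-1 : ℝ) 1) := hcont.integrableOn_Icc
  rw [← integrableOn_univ]
  have huniv : (univ : Set ℝ) ⊆ Iio (-1) ∪ (Icc (-1) 1 ∪ Ioi 1) := by
    intro x _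
    rcases lt_or_ge x (-1) with h | h
    · exact Or.inl h
    · rcases le_or_gt x 1 with h' | h'
      · exact Or.inr (Or.inl ⟨h, h'⟩)
      · exact Or.inr (Or.inr h')
  exact ((hIio.union (hIcc.union hIoi)).mono_set huniv)
end

section
/- Let p > 1, let C ≥ 0, and let h : ℝ² → ℂ be a measurable function such that |h(v)| ≤ C · ‖v‖⁻¹ · (1 + |log ‖v‖|)^{−p} for every nonzero v ∈ ℝ². Then for every g ∈ SL(2,ℝ) the function x ↦ h(g·(x,1)) is integrable on ℝ; i.e., the standard intertwining integral (J⁺h)(g) = ∫_{N⁺} h(gn) dn converges absolutely for every g ∈ G. -/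
open Matrix MeasureTheory Real Set Filter

noncomputable section

lemma aux_int {p K : ℝ} (hp : 1 < p) (hK : 0 < K) :
    IntegrableOn (fun x : ℝ => x⁻¹ * (1 + Real.log (x / K)) ^ (-p)) (Set.Ioi K) := by
  have hne : (1 : ℝ) - p ≠ 0 := by linarith
  have hder : ∀ x ∈ Ici K,
      HasDerivAt (fun x : ℝ => (1 - p)⁻¹ * (1 + Real.log (x / K)) ^ (1 - p))
        (x⁻¹ * (1 + Real.log (x / K)) ^ (-p)) x := by
    intro x hx
    have hx0 : 0 < x := lt_of_lt_of_le hK hx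
    have hdiv : (0 : ℝ) < x / K := div_pos hx0 hK
    have hb : 0 < 1 + Real.log (x / K) := by
      have := Real.log_nonneg ((one_le_div hK).2 hx)
      linarith
    have h1 : HasDerivAt (fun x : ℝ => 1 + Real.log (x / K)) x⁻¹ x := by
      have hd : HasDerivAt (fun x : ℝ => x / K) (1 / K) x := (hasDerivAt_id x).div_const K
      have := ((Real.hasDerivAt_log hdiv.ne').comp x hd).const_add 1
      refine this.congr_deriv ?_
      rw [one_div, ← mul_inv, div_mul_cancel₀ x hK.ne']
    have h2 := (h1.rpow_const (p := 1 - p) (Or.inl hb.ne')).const_mul ((1 : ℝ) - p)⁻¹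
    refine h2.congr_deriv ?_
    rw [show (1 : ℝ) - p - 1 = -p by ring]
    field_simp
  have hnonneg : ∀ x ∈ Ioi K, 0 ≤ x⁻¹ * (1 + Real.log (x / K)) ^ (-p) := by
    intro x hx
    have hx0 : 0 < x := hK.trans hx
    have hb : 0 ≤ 1 + Real.log (x / K) := by
      have := Real.log_nonneg ((one_le_div hK).2 hx.le)
      linarith
    exact mul_nonneg (inv_nonneg.2 hx0.le) (Real.rpow_nonneg hb _)
  have l1 : Tendsto (fun x : ℝ => 1 + Real.log (x / K)) atTop atTop :=
    tendsto_atTop_add_const_left _ 1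
      (Real.tendsto_log_atTop.comp (tendsto_id.atTop_div_const hK))
  have l2 : Tendsto (fun x : ℝ => (1 + Real.log (x / K)) ^ (1 - p)) atTop (nhds 0) := by
    have := (tendsto_rpow_neg_atTop (show (0:ℝ) < p - 1 by linarith)).comp l1
    simpa [Function.comp_def, neg_sub] using this
  have l3 : Tendsto (fun x : ℝ => (1 - p)⁻¹ * (1 + Real.log (x / K)) ^ (1 - p)) atTop
      (nhds 0) := by
    simpa using l2.const_mul ((1 : ℝ) - p)⁻¹
  exact integrableOn_Ioi_deriv_of_nonneg' hder hnonneg l3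

lemma aux2 {p C K : ℝ} (hp : 1 < p) (hK : 0 < K) {f : ℝ → ℂ}
    (hf : AEStronglyMeasurable f volume)
    (hb : ∀ x, K < x → ‖f x‖ ≤ C * K * (x⁻¹ * (1 + Real.log (x / K)) ^ (-p))) :
    IntegrableOn f (Set.Ioi K) := by
  refine Integrable.mono' ((aux_int hp hK).const_mul (C * K)) hf.restrict ?_
  filter_upwards [ae_restrict_mem measurableSet_Ioi] with x hx
  exact hb x hx

/-- Absolute convergence of the standard intertwining integral `J⁺`: if
`|h(v)| ≤ C·‖v‖⁻¹·(1+|log‖v‖|)^{-p}` for all nonzero `v` with `p > 1`, then for every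
`g ∈ SL(2,ℝ)` the function `x ↦ h(g·(x,1))` is integrable on `ℝ`. -/
theorem intertwining_integral_converges (p : ℝ) (hp : 1 < p) (C : ℝ) (hC : 0 ≤ C)
    (h : (Fin 2 → ℝ) → ℂ) (hmeas : Measurable h)
    (hbound : ∀ v : Fin 2 → ℝ, v ≠ 0 →
      ‖h v‖ ≤ C * (en v)⁻¹ * (1 + |Real.log (en v)|) ^ (-p)) :
    ∀ g : SL2,
      Integrable (fun x : ℝ => h ((g : Matrix (Fin 2) (Fin 2) ℝ).mulVec ![x, 1])) := by
  intro g
  set M : Matrix (Fin 2) (Fin 2) ℝ := (g : Matrix (Fin 2) (Fin 2) ℝ) with hM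
  set A : ℝ → Fin 2 → ℝ := fun x => M.mulVec ![x, 1] with hA
  have hdet : M 0 0 * M 1 1 - M 0 1 * M 1 0 = 1 := by
    have := g.property
    rwa [Matrix.det_fin_two] at this
  set a : ℝ := M 0 0 with ha
  set b : ℝ := M 0 1 with hb
  set c : ℝ := M 1 0 with hc
  set d : ℝ := M 1 1 with hd
  have hA0 : ∀ x, A x 0 = a * x + b := by
    intro x
    simp [hA, Matrix.mulVec, dotProduct, Fin.sum_univ_two, ha, hb]
  have hA1 : ∀ x, A x 1 = c * x + d := by
    intro x
    simp [hA, Matrix.mulVec, dotProduct, Fin.sum_univ_two, hc, hd]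
  -- the constant K
  set K : ℝ := |a| + |b| + |c| + |d| + 1 with hK
  have hKpos : 0 < K := by positivity
  have hen_nonneg : ∀ x, 0 ≤ en (A x) := fun x => Real.sqrt_nonneg _
  have habs0 : ∀ x, |A x 0| ≤ en (A x) := by
    intro x
    rw [← Real.sqrt_sq_eq_abs]
    exact Real.sqrt_le_sqrt (by nlinarith [sq_nonneg (A x 1)])
  have habs1 : ∀ x, |A x 1| ≤ en (A x) := by
    intro x
    rw [← Real.sqrt_sq_eq_abs]
    exact Real.sqrt_le_sqrt (by nlinarith [sq_nonneg (A x 0)])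
  have h1K : ∀ x, 1 ≤ K * en (A x) := by
    intro x
    have e1 : -c * A x 0 + a * A x 1 = 1 := by
      rw [hA0, hA1]; linear_combination hdet
    have e2 : (1 : ℝ) ≤ |c| * |A x 0| + |a| * |A x 1| := by
      calc (1 : ℝ) = |(-c) * A x 0 + a * A x 1| := by rw [e1, abs_one]
        _ ≤ |(-c) * A x 0| + |a * A x 1| := abs_add_le _ _
        _ = |c| * |A x 0| + |a| * |A x 1| := by rw [abs_mul, abs_mul, abs_neg]
    nlinarith [habs0 x, habs1 x, abs_nonneg a, abs_nonneg b, abs_nonneg c, abs_nonneg d,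
      hen_nonneg x, abs_nonneg (A x 0), abs_nonneg (A x 1)]
  have hxK : ∀ x : ℝ, |x| ≤ K * en (A x) := by
    intro x
    have e1 : d * A x 0 + -b * A x 1 = x := by
      rw [hA0, hA1]; linear_combination x * hdet
    have e2 : |x| ≤ |d| * |A x 0| + |b| * |A x 1| := by
      calc |x| = |d * A x 0 + (-b) * A x 1| := by rw [e1]
        _ ≤ |d * A x 0| + |(-b) * A x 1| := abs_add_le _ _
        _ = |d| * |A x 0| + |b| * |A x 1| := by rw [abs_mul, abs_mul, abs_neg]
    nlinarith [habs0 x, habs1 x, abs_nonneg a, abs_nonneg b, abs_nonneg c, abs_nonneg d,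
      hen_nonneg x, abs_nonneg (A x 0), abs_nonneg (A x 1)]
  have hen_pos : ∀ x, 0 < en (A x) := by
    intro x
    nlinarith [h1K x, hen_nonneg x]
  have hAne : ∀ x, A x ≠ 0 := by
    intro x hx
    have h1 := hen_pos x
    rw [hx] at h1
    simp [en] at h1
  have measA : Measurable A := by
    have hAeq : A = fun x => ![a * x + b, c * x + d] := by
      funext x
      ext i
      fin_cases i
      · exact hA0 x
      · exact hA1 x
    rw [hAeq]
    apply measurable_pi_lambda
    intro i
    fin_cases i
    · show Measurable fun x : ℝ => a * x + b
      fun_prop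
    · show Measurable fun x : ℝ => c * x + d
      fun_prop
  have hfm : AEStronglyMeasurable (fun x => h (A x)) volume :=
    (hmeas.comp measA).aestronglyMeasurable
  -- the key bound for |x| > K
  have key : ∀ x : ℝ, K < |x| →
      ‖h (A x)‖ ≤ C * K * (|x|⁻¹ * (1 + Real.log (|x| / K)) ^ (-p)) := by
    intro x hx
    have hxpos : 0 < |x| := hKpos.trans hx
    have ht : |x| / K ≤ en (A x) := by
      rw [div_le_iff₀ hKpos, mul_comm]
      exact hxK x
    have h1t : 1 < |x| / K := (one_lt_div hKpos).2 hx
    have ht1 : 1 < en (A x) := h1t.trans_le ht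
    have hlog0 : 0 ≤ Real.log (|x| / K) := Real.log_nonneg h1t.le
    have hloge : |Real.log (en (A x))| = Real.log (en (A x)) :=
      abs_of_nonneg (Real.log_nonneg ht1.le)
    have hlogle : Real.log (|x| / K) ≤ Real.log (en (A x)) :=
      Real.log_le_log (by positivity) ht
    have hr : (1 + |Real.log (en (A x))|) ^ (-p) ≤ (1 + Real.log (|x| / K)) ^ (-p) := by
      apply Real.rpow_le_rpow_of_nonpos (by linarith) (by rw [hloge]; linarith) (by linarith)
    have hinv : (en (A x))⁻¹ ≤ (|x| / K)⁻¹ := by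
      apply inv_anti₀ (by positivity) ht
    calc ‖h (A x)‖ ≤ C * (en (A x))⁻¹ * (1 + |Real.log (en (A x))|) ^ (-p) :=
          hbound (A x) (hAne x)
      _ ≤ C * (|x| / K)⁻¹ * (1 + Real.log (|x| / K)) ^ (-p) := by
          exact mul_le_mul (mul_le_mul_of_nonneg_left hinv hC) hr
            (Real.rpow_nonneg (by positivity) _) (mul_nonneg hC (by positivity))
      _ = C * K * (|x|⁻¹ * (1 + Real.log (|x| / K)) ^ (-p)) := by
          rw [inv_div]; field_simp
  -- decompose ℝ
  rw [← integrableOn_univ, ← Set.Iic_union_Ioi (a := K), integrableOn_union,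
    ← Set.Iic_union_Ioc_eq_Iic (show -K ≤ K by linarith), integrableOn_union]
  refine ⟨⟨?_, ?_⟩, ?_⟩
  · -- Iic (-K)
    have hright : IntegrableOn (fun x : ℝ => h (A (-x))) (Set.Ioi K) := by
      apply aux2 hp hKpos ((hmeas.comp (measA.comp measurable_neg)).aestronglyMeasurable)
      intro x hx
      have hxpos : 0 < x := hKpos.trans hx
      have habsx : |(-x : ℝ)| = x := by rw [abs_neg, abs_of_pos hxpos]
      have := key (-x) (by rwa [habsx])
      rwa [habsx] at this
    rw [← (Measure.measurePreserving_neg (volume : Measure ℝ)).integrableOn_comp_preimage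
      (Homeomorph.neg ℝ).measurableEmbedding]
    simp only [Function.comp_def, Set.neg_preimage, Set.neg_Iic, neg_neg]
    rw [integrableOn_Ici_iff_integrableOn_Ioi]
    exact hright
  · -- Ioc (-K) K
    refine Integrable.mono' (g := fun _ => C * K)
      (integrableOn_const measure_Ioc_lt_top.ne) hfm.restrict ?_
    filter_upwards with x
    have h1 := hbound (A x) (hAne x)
    have hr1 : (1 + |Real.log (en (A x))|) ^ (-p) ≤ 1 := by
      apply Real.rpow_le_one_of_one_le_of_nonpos
        (by linarith [abs_nonneg (Real.log (en (A x)))]) (by linarith)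
    have h2 : (en (A x))⁻¹ ≤ K := by
      have h3 := h1K x
      have h4 := hen_pos x
      nlinarith [mul_nonneg (show (0:ℝ) ≤ K * en (A x) - 1 by linarith)
        (inv_nonneg.2 h4.le), mul_inv_cancel₀ h4.ne']
    calc ‖h (A x)‖ ≤ C * (en (A x))⁻¹ * (1 + |Real.log (en (A x))|) ^ (-p) := h1
      _ ≤ C * K * 1 := by
          exact mul_le_mul (mul_le_mul_of_nonneg_left h2 hC) hr1
            (Real.rpow_nonneg (by positivity) _) (mul_nonneg hC hKpos.le)
      _ = C * K := mul_one _
  · -- Ioi K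
    apply aux2 hp hKpos hfm
    intro x hx
    have hxpos : 0 < x := hKpos.trans hx
    have habsx : |x| = x := abs_of_pos hxpos
    have := key x (by rwa [habsx])
    rwa [habsx] at this
end
end

section
/- For every p > 1 there exists a constant C_p depending only on p with the following property: if C ≥ 0 and h : ℝ² → ℂ is measurable with |h(v)| ≤ C · ‖v‖⁻¹ · (1 + |log ‖v‖|)^{−p} for all nonzero v ∈ ℝ², then for every g ∈ SL(2,ℝ) one has ∫_ℝ |h(g·(x,1))| dx ≤ C · C_p · ‖g·(1,0)‖⁻¹. (This is the bound |(J⁺h)(x)| ≤ const_h · δ⁺(x)^{−1/2} for the intertwining integral, since δ⁺(g)^{−1/2} = ‖g e₁‖⁻¹.) -/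
open Matrix MeasureTheory Real

noncomputable section

open Set
open scoped ENNReal


/-- 1-D change of variables for lower Lebesgue integrals. -/
lemma lintegral_image_1d {s : Set ℝ} {f f' : ℝ → ℝ}
    (hs : MeasurableSet s) (hf' : ∀ x ∈ s, HasDerivWithinAt f (f' x) s x)
    (hf : Set.InjOn f s) (g : ℝ → ℝ≥0∞) :
    ∫⁻ x in f '' s, g x = ∫⁻ x in s, ENNReal.ofReal |f' x| * g (f x) := by
  simpa only [ContinuousLinearMap.det_toSpanSingleton] using
    lintegral_image_eq_lintegral_abs_det_fderiv_mul volume hs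
      (fun x hx => (hf' x hx).hasFDerivWithinAt) hf g

lemma integrable_one_add_abs {p : ℝ} (hp : 1 < p) :
    Integrable (fun t : ℝ => (1 + |t|) ^ (-p)) := by
  have h1 : (Module.finrank ℝ ℝ : ℝ) < p := by simpa using hp
  simpa [Real.norm_eq_abs] using integrable_one_add_norm (E := ℝ) (μ := volume) h1

lemma lintegral_one_add_abs {p : ℝ} (hp : 1 < p) :
    ∫⁻ t : ℝ, ENNReal.ofReal ((1 + |t|) ^ (-p))
      = ENNReal.ofReal (∫ t : ℝ, (1 + |t|) ^ (-p)) :=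
  (ofReal_integral_eq_lintegral_ofReal (integrable_one_add_abs hp)
    (Filter.Eventually.of_forall fun t => by positivity)).symm

/-- The affine change of variables for lintegral on the line. -/
lemma lintegral_affine {A c : ℝ} (hA : 0 < A) (G : ℝ → ℝ≥0∞) :
    ∫⁻ x : ℝ, G (A * x + c) = ENNReal.ofReal A⁻¹ * ∫⁻ u : ℝ, G u := by
  have hsurj : Function.Surjective (fun x : ℝ => A * x + c) := fun u =>
    ⟨(u - c) / A, by field_simp; ring⟩
  have himg : (fun x : ℝ => A * x + c) '' univ = univ := by
    rw [image_univ, hsurj.range_eq]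
  have hderiv : ∀ x ∈ (univ : Set ℝ),
      HasDerivWithinAt (fun x : ℝ => A * x + c) A univ x := fun x _ => by
    simpa using ((hasDerivAt_id x).const_mul A).add_const c
  have hinj : Set.InjOn (fun x : ℝ => A * x + c) univ := fun a _ b _ hab => by
    have : A * a = A * b := by dsimp at hab; linarith
    exact mul_left_cancel₀ hA.ne' this
  have h := lintegral_image_1d MeasurableSet.univ hderiv hinj G
  rw [himg, setLIntegral_univ, setLIntegral_univ] at h
  simp only [abs_of_pos hA] at h
  rw [lintegral_const_mul' (ENNReal.ofReal A) _ ENNReal.ofReal_ne_top] at h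
  rw [h, ← mul_assoc, ← ENNReal.ofReal_mul (by positivity), inv_mul_cancel₀ hA.ne',
    ENNReal.ofReal_one, one_mul]

/-- lintegral of `|u|⁻¹ (1+|log|u||)^{-p}` over a half line, via `u = eᵗ`. -/
lemma lintegral_halfline_pos (p : ℝ) :
    ∫⁻ u in Ioi (0:ℝ), ENNReal.ofReal (|u|⁻¹ * (1 + |Real.log (|u|)|) ^ (-p))
      = ∫⁻ t : ℝ, ENNReal.ofReal ((1 + |t|) ^ (-p)) := by
  have himg : Real.exp '' univ = Ioi (0:ℝ) := by rw [image_univ, Real.range_exp]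
  rw [← himg, lintegral_image_1d MeasurableSet.univ
      (fun x _ => (Real.hasDerivAt_exp x).hasDerivWithinAt) Real.exp_injective.injOn,
    setLIntegral_univ]
  congr 1; funext t
  rw [abs_of_pos (Real.exp_pos t), ← ENNReal.ofReal_mul (Real.exp_pos t).le]
  congr 1
  rw [Real.log_exp, ← mul_assoc, mul_inv_cancel₀ (Real.exp_ne_zero t), one_mul]

lemma lintegral_halfline_neg (p : ℝ) :
    ∫⁻ u in Iio (0:ℝ), ENNReal.ofReal (|u|⁻¹ * (1 + |Real.log (|u|)|) ^ (-p))
      = ∫⁻ t : ℝ, ENNReal.ofReal ((1 + |t|) ^ (-p)) := by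
  have himg : (fun t : ℝ => -Real.exp t) '' univ = Iio (0:ℝ) := by
    rw [image_univ]
    ext u
    simp only [mem_range, mem_Iio]
    constructor
    · rintro ⟨t, rfl⟩; simpa using (Real.exp_pos t)
    · intro hu
      exact ⟨Real.log (-u), by rw [Real.exp_log (by linarith)]; ring⟩
  have hderiv : ∀ x ∈ (univ : Set ℝ),
      HasDerivWithinAt (fun t : ℝ => -Real.exp t) (-Real.exp x) univ x := fun x _ =>
    ((Real.hasDerivAt_exp x).neg).hasDerivWithinAt
  have hinj : Set.InjOn (fun t : ℝ => -Real.exp t) univ := fun a _ b _ hab =>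
    Real.exp_injective (neg_injective hab)
  rw [← himg, lintegral_image_1d MeasurableSet.univ hderiv hinj, setLIntegral_univ]
  congr 1; funext t
  rw [abs_neg, abs_of_pos (Real.exp_pos t), ← ENNReal.ofReal_mul (Real.exp_pos t).le]
  congr 1
  rw [Real.log_exp, ← mul_assoc, mul_inv_cancel₀ (Real.exp_ne_zero t), one_mul]

/-- The basic pointwise comparison: if `0 < m ≤ r ≤ 2m` then
`f(r) ≤ (1+log 2)^p f(m)` for `f(r) = r⁻¹ (1+|log r|)^{-p}`. -/
lemma pointwise_compare {p m r : ℝ} (hp : 0 < p) (hm : 0 < m) (h1 : m ≤ r) (h2 : r ≤ 2 * m) :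
    r⁻¹ * (1 + |Real.log r|) ^ (-p)
      ≤ (1 + Real.log 2) ^ p * (m⁻¹ * (1 + |Real.log m|) ^ (-p)) := by
  have hr : 0 < r := lt_of_lt_of_le hm h1
  have hlog2 : (0:ℝ) ≤ Real.log 2 := Real.log_nonneg one_le_two
  have hlogm : |Real.log m| ≤ |Real.log r| + Real.log 2 := by
    have h3 : Real.log m ≤ Real.log r := Real.log_le_log hm h1
    have h4 : Real.log r ≤ Real.log m + Real.log 2 := by
      have h5 : Real.log r ≤ Real.log (2 * m) := Real.log_le_log hr h2
      rw [Real.log_mul two_ne_zero hm.ne'] at h5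
      linarith
    have h6 : |Real.log m| - |Real.log r| ≤ |Real.log m - Real.log r| :=
      abs_sub_abs_le_abs_sub _ _
    have h7 : |Real.log m - Real.log r| = Real.log r - Real.log m := by
      rw [abs_sub_comm, abs_of_nonneg (by linarith)]
    linarith
  have key : 1 + |Real.log m| ≤ (1 + Real.log 2) * (1 + |Real.log r|) := by
    nlinarith [abs_nonneg (Real.log r)]
  have hb1 : (0:ℝ) < 1 + |Real.log m| := by positivity
  have hb2 : (0:ℝ) < 1 + |Real.log r| := by positivity
  have hb3 : (0:ℝ) < 1 + Real.log 2 := by linarith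
  have e1 : ((1 + Real.log 2) * (1 + |Real.log r|)) ^ (-p) ≤ (1 + |Real.log m|) ^ (-p) :=
    Real.rpow_le_rpow_of_nonpos hb1 key (by linarith)
  rw [Real.mul_rpow hb3.le hb2.le] at e1
  have e2 : (1 + |Real.log r|) ^ (-p)
      ≤ (1 + Real.log 2) ^ p * (1 + |Real.log m|) ^ (-p) := by
    have hpow : (0:ℝ) < (1 + Real.log 2) ^ p := Real.rpow_pos_of_pos hb3 p
    have hinv : (1 + Real.log 2) ^ (-p) = ((1 + Real.log 2) ^ p)⁻¹ := by
      rw [Real.rpow_neg hb3.le]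
    rw [hinv] at e1
    calc (1 + |Real.log r|) ^ (-p)
        = (1 + Real.log 2) ^ p * (((1 + Real.log 2) ^ p)⁻¹ * (1 + |Real.log r|) ^ (-p)) := by
          field_simp
      _ ≤ (1 + Real.log 2) ^ p * (1 + |Real.log m|) ^ (-p) := by
          exact mul_le_mul_of_nonneg_left e1 hpow.le
  have hrinv : r⁻¹ ≤ m⁻¹ := inv_anti₀ hm h1
  calc r⁻¹ * (1 + |Real.log r|) ^ (-p)
      ≤ m⁻¹ * ((1 + Real.log 2) ^ p * (1 + |Real.log m|) ^ (-p)) := by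
        apply mul_le_mul hrinv e2 (by positivity) (by positivity)
    _ = (1 + Real.log 2) ^ p * (m⁻¹ * (1 + |Real.log m|) ^ (-p)) := by ring

/-- The uniform core bound. -/
lemma core_bound {p : ℝ} (hp : 1 < p) {s : ℝ} (hs : 0 < s) :
    ∫⁻ u : ℝ, ENNReal.ofReal ((Real.sqrt (u ^ 2 + s ^ 2))⁻¹ *
        (1 + |Real.log (Real.sqrt (u ^ 2 + s ^ 2))|) ^ (-p))
      ≤ ENNReal.ofReal
          ((1 + Real.log 2) ^ p * (2 + 2 * ∫ t : ℝ, (1 + |t|) ^ (-p))) := by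
  set Ip := ∫ t : ℝ, (1 + |t|) ^ (-p) with hIpdef
  have hIp : 0 ≤ Ip := integral_nonneg fun t => by positivity
  have hb3 : (0:ℝ) < 1 + Real.log 2 := by
    have := Real.log_nonneg (by norm_num : (1:ℝ) ≤ 2); linarith
  have hKpos : (0:ℝ) < (1 + Real.log 2) ^ p := Real.rpow_pos_of_pos hb3 p
  set K := (1 + Real.log 2) ^ p with hKdef
  set fm : ℝ → ℝ := fun u => (max |u| s)⁻¹ * (1 + |Real.log (max |u| s)|) ^ (-p) with hfm
  have step1 : ∀ u : ℝ,
      (Real.sqrt (u ^ 2 + s ^ 2))⁻¹ * (1 + |Real.log (Real.sqrt (u ^ 2 + s ^ 2))|) ^ (-p)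
        ≤ K * fm u := by
    intro u
    have hm : 0 < max |u| s := lt_of_lt_of_le hs (le_max_right _ _)
    have h1 : max |u| s ≤ Real.sqrt (u ^ 2 + s ^ 2) := by
      apply max_le
      · calc |u| = Real.sqrt (u ^ 2) := (Real.sqrt_sq_eq_abs u).symm
          _ ≤ _ := Real.sqrt_le_sqrt (by nlinarith [sq_nonneg s])
      · calc s = Real.sqrt (s ^ 2) := (Real.sqrt_sq hs.le).symm
          _ ≤ _ := Real.sqrt_le_sqrt (by nlinarith [sq_nonneg u])
    have h2 : Real.sqrt (u ^ 2 + s ^ 2) ≤ 2 * max |u| s := by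
      rw [← Real.sqrt_sq (by positivity : (0:ℝ) ≤ 2 * max |u| s)]
      apply Real.sqrt_le_sqrt
      have hu1 : |u| ≤ max |u| s := le_max_left _ _
      have hs1 : s ≤ max |u| s := le_max_right _ _
      have hu : u ^ 2 ≤ (max |u| s) ^ 2 := by nlinarith [abs_nonneg u, sq_abs u]
      have hs2 : s ^ 2 ≤ (max |u| s) ^ 2 := by nlinarith
      nlinarith [sq_nonneg (max |u| s)]
    exact pointwise_compare (by linarith) hm h1 h2
  have hfm_nonneg : ∀ u, 0 ≤ fm u := fun u => by
    have hm : 0 < max |u| s := lt_of_lt_of_le hs (le_max_right _ _)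
    positivity
  calc ∫⁻ u : ℝ, ENNReal.ofReal ((Real.sqrt (u ^ 2 + s ^ 2))⁻¹ *
        (1 + |Real.log (Real.sqrt (u ^ 2 + s ^ 2))|) ^ (-p))
      ≤ ∫⁻ u : ℝ, ENNReal.ofReal (K * fm u) :=
        lintegral_mono fun u => ENNReal.ofReal_le_ofReal (step1 u)
    _ = ENNReal.ofReal K * ∫⁻ u : ℝ, ENNReal.ofReal (fm u) := by
        simp_rw [ENNReal.ofReal_mul hKpos.le]
        exact lintegral_const_mul' _ _ ENNReal.ofReal_ne_top
    _ ≤ ENNReal.ofReal K * ENNReal.ofReal (2 + 2 * Ip) := by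
        apply mul_le_mul_right
        have hsplit : ∫⁻ u : ℝ, ENNReal.ofReal (fm u)
            = (∫⁻ u in Icc (-s) s, ENNReal.ofReal (fm u))
              + ∫⁻ u in (Icc (-s) s)ᶜ, ENNReal.ofReal (fm u) :=
          (lintegral_add_compl _ measurableSet_Icc).symm
        rw [hsplit]
        have bound1 : ∫⁻ u in Icc (-s) s, ENNReal.ofReal (fm u) ≤ ENNReal.ofReal 2 := by
          have e1 : ∫⁻ u in Icc (-s) s, ENNReal.ofReal (fm u)
              = ∫⁻ _u in Icc (-s) s,
                  ENNReal.ofReal (s⁻¹ * (1 + |Real.log s|) ^ (-p)) := by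
            apply setLIntegral_congr_fun measurableSet_Icc
            intro u hu
            have habs : |u| ≤ s := abs_le.2 ⟨hu.1, hu.2⟩
            rw [hfm]
            simp only [max_eq_right habs]
          rw [e1, setLIntegral_const, Real.volume_Icc,
            ← ENNReal.ofReal_mul (by positivity)]
          apply ENNReal.ofReal_le_ofReal
          have hX : (1 + |Real.log s|) ^ (-p) ≤ 1 :=
            Real.rpow_le_one_of_one_le_of_nonpos
              (by linarith [abs_nonneg (Real.log s)]) (by linarith)
          have : s⁻¹ * (1 + |Real.log s|) ^ (-p) * (s - -s)
              = 2 * (1 + |Real.log s|) ^ (-p) := by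
            field_simp; ring
          rw [this]; linarith
        have bound2 : ∫⁻ u in (Icc (-s) s)ᶜ, ENNReal.ofReal (fm u)
            ≤ ENNReal.ofReal Ip + ENNReal.ofReal Ip := by
          have e2 : ∫⁻ u in (Icc (-s) s)ᶜ, ENNReal.ofReal (fm u)
              = ∫⁻ u in (Icc (-s) s)ᶜ,
                  ENNReal.ofReal (|u|⁻¹ * (1 + |Real.log (|u|)|) ^ (-p)) := by
            apply setLIntegral_congr_fun measurableSet_Icc.compl
            intro u hu
            have habs : s ≤ |u| := by
              rw [mem_compl_iff, mem_Icc, not_and_or] at hu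
              rw [le_abs]
              rcases hu with hu | hu
              · right; push_neg at hu; linarith
              · left; push_neg at hu; linarith
            rw [hfm]
            simp only [max_eq_left habs]
          rw [e2]
          calc ∫⁻ u in (Icc (-s) s)ᶜ,
                  ENNReal.ofReal (|u|⁻¹ * (1 + |Real.log (|u|)|) ^ (-p))
              ≤ ∫⁻ u : ℝ, ENNReal.ofReal (|u|⁻¹ * (1 + |Real.log (|u|)|) ^ (-p)) :=
                setLIntegral_le_lintegral _ _
            _ = (∫⁻ u in Iio (0:ℝ), ENNReal.ofReal (|u|⁻¹ * (1 + |Real.log (|u|)|) ^ (-p)))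
                  + ∫⁻ u in (Iio (0:ℝ))ᶜ,
                      ENNReal.ofReal (|u|⁻¹ * (1 + |Real.log (|u|)|) ^ (-p)) :=
                (lintegral_add_compl _ measurableSet_Iio).symm
            _ = ENNReal.ofReal Ip + ENNReal.ofReal Ip := by
                have c1 : (Iio (0:ℝ))ᶜ = Ici (0:ℝ) := compl_Iio
                rw [c1, ← setLIntegral_congr (Ioi_ae_eq_Ici (μ := volume) (a := (0:ℝ))),
                  lintegral_halfline_pos, lintegral_halfline_neg, lintegral_one_add_abs hp,
                  hIpdef]
        calc (∫⁻ u in Icc (-s) s, ENNReal.ofReal (fm u))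
              + ∫⁻ u in (Icc (-s) s)ᶜ, ENNReal.ofReal (fm u)
            ≤ ENNReal.ofReal 2 + (ENNReal.ofReal Ip + ENNReal.ofReal Ip) :=
              add_le_add bound1 bound2
          _ = ENNReal.ofReal (2 + 2 * Ip) := by
              rw [← ENNReal.ofReal_add hIp hIp, ← ENNReal.ofReal_add (by norm_num)
                (by linarith)]
              ring_nf
    _ = ENNReal.ofReal (K * (2 + 2 * Ip)) := by
        rw [← ENNReal.ofReal_mul hKpos.le]

/-- The bound `|(J⁺h)(x)| ≤ const_h · δ⁺(x)^{-1/2}`: for every `p > 1` there is a constant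
`Cp`, depending only on `p`, such that whenever `|h(v)| ≤ C·‖v‖⁻¹·(1+|log‖v‖|)^{-p}` for all
nonzero `v`, one has `∫_ℝ |h(g·(x,1))| dx ≤ C·Cp·‖g·(1,0)‖⁻¹` for every `g ∈ SL(2,ℝ)`. -/
theorem intertwining_integral_bound (p : ℝ) (hp : 1 < p) :
    ∃ Cp : ℝ, ∀ C : ℝ, 0 ≤ C → ∀ h : (Fin 2 → ℝ) → ℂ, Measurable h →
      (∀ v : Fin 2 → ℝ, v ≠ 0 →
        ‖h v‖ ≤ C * (en v)⁻¹ * (1 + |Real.log (en v)|) ^ (-p)) →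
      ∀ g : SL2,
        (∫⁻ x : ℝ, ENNReal.ofReal ‖h ((g : Matrix (Fin 2) (Fin 2) ℝ).mulVec ![x, 1])‖)
          ≤ ENNReal.ofReal
              (C * Cp * (en ((g : Matrix (Fin 2) (Fin 2) ℝ).mulVec ![1, 0]))⁻¹) := by
  refine ⟨(1 + Real.log 2) ^ p * (2 + 2 * ∫ t : ℝ, (1 + |t|) ^ (-p)), ?_⟩
  intro C hC h _hmeas hbound g
  set M := (g : Matrix (Fin 2) (Fin 2) ℝ) with hM
  have hdet : M 0 0 * M 1 1 - M 0 1 * M 1 0 = 1 := by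
    have hd := g.prop
    rwa [Matrix.det_fin_two] at hd
  have hA2pos : 0 < M 0 0 ^ 2 + M 1 0 ^ 2 := by
    rcases eq_or_lt_of_le (by positivity : (0:ℝ) ≤ M 0 0 ^ 2 + M 1 0 ^ 2) with h0 | h0
    · exfalso
      have h1 : M 0 0 ^ 2 = 0 := by nlinarith [sq_nonneg (M 1 0)]
      have h2 : M 1 0 ^ 2 = 0 := by nlinarith [sq_nonneg (M 0 0)]
      have h00 : M 0 0 = 0 := by
        exact pow_eq_zero_iff (by norm_num) |>.1 h1
      have h10 : M 1 0 = 0 := by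
        exact pow_eq_zero_iff (by norm_num) |>.1 h2
      rw [h00, h10] at hdet
      norm_num at hdet
    · exact h0
  set A := Real.sqrt (M 0 0 ^ 2 + M 1 0 ^ 2) with hA
  have hApos : 0 < A := Real.sqrt_pos.2 hA2pos
  have hA2 : A ^ 2 = M 0 0 ^ 2 + M 1 0 ^ 2 := Real.sq_sqrt hA2pos.le
  set B := M 0 0 * M 0 1 + M 1 0 * M 1 1 with hB
  have hen1 : en (M.mulVec ![1, 0]) = A := by
    rw [en]
    simp [Matrix.mulVec, dotProduct, Fin.sum_univ_two]
    rfl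
  have hmv : ∀ x : ℝ, M.mulVec ![x, 1] = ![M 0 0 * x + M 0 1, M 1 0 * x + M 1 1] := by
    intro x
    funext i
    fin_cases i <;> simp [Matrix.mulVec, dotProduct, Fin.sum_univ_two]
  have key : ∀ x : ℝ, en (M.mulVec ![x, 1])
      = Real.sqrt ((A * x + B / A) ^ 2 + (A⁻¹) ^ 2) := by
    intro x
    rw [hmv x, en]
    simp only [Matrix.cons_val_zero, Matrix.cons_val_one, Matrix.head_cons]
    congr 1
    have expand : (A * x + B / A) ^ 2 + (A⁻¹) ^ 2 = ((A ^ 2 * x + B) ^ 2 + 1) / A ^ 2 := by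
      field_simp
    rw [expand, hA2, eq_div_iff (by positivity), hB]
    linear_combination (M 0 0 * M 1 1 - M 0 1 * M 1 0 + 1) * hdet
  have hpos : ∀ x : ℝ, 0 < en (M.mulVec ![x, 1]) := fun x => by
    rw [key x]
    exact Real.sqrt_pos.2 (by positivity)
  have hne : ∀ x : ℝ, M.mulVec ![x, 1] ≠ 0 := fun x h0 => by
    have hpx := hpos x
    rw [h0] at hpx
    simp [en] at hpx
  rw [hen1]
  set G : ℝ → ℝ≥0∞ := fun u => ENNReal.ofReal ((Real.sqrt (u ^ 2 + (A⁻¹) ^ 2))⁻¹ *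
      (1 + |Real.log (Real.sqrt (u ^ 2 + (A⁻¹) ^ 2))|) ^ (-p)) with hG
  set Ip := ∫ t : ℝ, (1 + |t|) ^ (-p) with hIpdef
  calc ∫⁻ x : ℝ, ENNReal.ofReal ‖h (M.mulVec ![x, 1])‖
      ≤ ∫⁻ x : ℝ, ENNReal.ofReal C * G (A * x + B / A) := by
        apply lintegral_mono fun x => ?_
        rw [hG, ← ENNReal.ofReal_mul hC]
        apply ENNReal.ofReal_le_ofReal
        have hb := hbound _ (hne x)
        rw [key x, mul_assoc] at hb
        exact hb
    _ = ENNReal.ofReal C * ∫⁻ x : ℝ, G (A * x + B / A) :=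
        lintegral_const_mul' _ _ ENNReal.ofReal_ne_top
    _ = ENNReal.ofReal C * (ENNReal.ofReal A⁻¹ * ∫⁻ u : ℝ, G u) := by
        rw [lintegral_affine hApos G]
    _ ≤ ENNReal.ofReal C * (ENNReal.ofReal A⁻¹
          * ENNReal.ofReal ((1 + Real.log 2) ^ p * (2 + 2 * Ip))) := by
        refine mul_le_mul_right (mul_le_mul_right ?_ _) _
        exact core_bound hp (inv_pos.2 hApos)
    _ = ENNReal.ofReal (C * ((1 + Real.log 2) ^ p * (2 + 2 * Ip)) * A⁻¹) := by
        rw [← ENNReal.ofReal_mul (by positivity : (0:ℝ) ≤ A⁻¹), ← ENNReal.ofReal_mul hC]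
        congr 1
        ring

end
end

section
/- Let h : ℝ² → ℂ be a Schwartz function. Then for every real m ≥ 1 there exists a constant C (depending on h and m) such that for every g ∈ SL(2,ℝ): ∫_ℝ |h(g·(x,1))| dx ≤ C · ‖g·(1,0)‖^m. (This says: if h ∈ 𝒮(G/N̄), then |(J⁺h)(x)| ≤ const_{h,m} · δ⁺(x)^{m/2} for all x ∈ G/N⁺ and all m ≥ 1.) -/
open Matrix MeasureTheory Real

noncomputable section

/-- Auxiliary: the integral of `(1 + (r x + c)²)⁻¹` is `π / r`. -/
lemma aux_integral (r c : ℝ) (hr : 0 < r) :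
    ∫ x : ℝ, (1 + (r * x + c) ^ 2)⁻¹ = π / r := by
  have h0 : ∀ x : ℝ, r * x + c = r * (x + c / r) := by
    intro x; field_simp
  simp only [h0]
  rw [integral_add_right_eq_self (fun z : ℝ => (1 + (r * z) ^ 2)⁻¹) (c / r)]
  have h1 : (∫ x : ℝ, (fun y : ℝ => (1 + y ^ 2)⁻¹) (r * x))
      = |r⁻¹| • ∫ y : ℝ, (1 + y ^ 2)⁻¹ :=
    Measure.integral_comp_mul_left (fun y : ℝ => (1 + y ^ 2)⁻¹) r
  simp only at h1
  rw [h1, integral_univ_inv_one_add_sq, smul_eq_mul, abs_of_pos (inv_pos.2 hr)]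
  rw [div_eq_mul_inv, mul_comm]

/-- Auxiliary: integrability of `(1 + (r x + c)²)⁻¹`. -/
lemma aux_integrable (r c : ℝ) (hr : r ≠ 0) :
    Integrable (fun x : ℝ => (1 + (r * x + c) ^ 2)⁻¹) := by
  have h1 : Integrable (fun z : ℝ => (1 + (r * z) ^ 2)⁻¹) :=
    integrable_inv_one_add_sq.comp_mul_left' hr
  have h2 := h1.comp_add_right (c / r)
  have h0 : (fun x : ℝ => (1 + (r * x + c) ^ 2)⁻¹)
      = fun x : ℝ => (1 + (r * (x + c / r)) ^ 2)⁻¹ := by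
    funext x
    rw [show r * (x + c / r) = r * x + c by field_simp]
  rw [h0]
  exact h2

set_option maxHeartbeats 2000000 in
/-- If `h` is a Schwartz function on `ℝ²` (i.e. `h ∈ 𝒮(G/N̄)`), then for every `m ≥ 1`
there is a constant `C` (depending on `h` and `m`) with
`∫_ℝ |h(g·(x,1))| dx ≤ C·‖g·(1,0)‖^m` for every `g ∈ SL(2,ℝ)`; i.e.
`|(J⁺h)(x)| ≤ const_{h,m} · δ⁺(x)^{m/2}`. -/
theorem intertwining_of_schwartz_rapid_growth
    (h : SchwartzMap (EuclideanSpace ℝ (Fin 2)) ℂ) (m : ℝ) (hm : 1 ≤ m) :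
    ∃ C : ℝ, ∀ g : SL2,
      (∫⁻ x : ℝ, ENNReal.ofReal
          ‖h ((EuclideanSpace.equiv (Fin 2) ℝ).symm
              ((g : Matrix (Fin 2) (Fin 2) ℝ).mulVec ![x, 1]))‖)
        ≤ ENNReal.ofReal (C * (en ((g : Matrix (Fin 2) (Fin 2) ℝ).mulVec ![1, 0])) ^ m) := by
  set j : ℕ := ⌈m⌉₊ + 2 with hjdef
  have hj2 : 2 ≤ j := by omega
  have hjm : m ≤ (j : ℝ) - 1 := by
    have := Nat.le_ceil m
    push_cast [hjdef]
    linarith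
  set Cs : ℝ := 2 ^ (2 * j) *
      (Finset.Iic (2 * j, 0)).sup (fun p => SchwartzMap.seminorm ℝ p.1 p.2) h with hCsdef
  have hCs0 : 0 ≤ Cs := by
    apply mul_nonneg (by positivity)
    exact apply_nonneg _ _
  refine ⟨π * Cs, fun g => ?_⟩
  set A := (g : Matrix (Fin 2) (Fin 2) ℝ) with hAdef
  have hdet : A 0 0 * A 1 1 - A 0 1 * A 1 0 = 1 := by
    have := g.2
    rwa [Matrix.det_fin_two] at this
  set a := A 0 0 with ha
  set b := A 1 0 with hb
  set c := A 0 1 with hc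
  set d := A 1 1 with hd
  have hq : 0 < a ^ 2 + b ^ 2 := by
    rcases lt_or_ge 0 (a ^ 2 + b ^ 2) with h1 | h1
    · exact h1
    · exfalso
      have ha0 : a = 0 := by nlinarith [sq_nonneg a, sq_nonneg b]
      have hb0 : b = 0 := by nlinarith [sq_nonneg a, sq_nonneg b]
      rw [ha0, hb0] at hdet
      simp at hdet
  set r := Real.sqrt (a ^ 2 + b ^ 2) with hrdef
  have hr : 0 < r := Real.sqrt_pos.2 hq
  have hr2 : r ^ 2 = a ^ 2 + b ^ 2 := Real.sq_sqrt hq.le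
  set s := a * c + b * d with hsdef
  have hen : en (A.mulVec ![1, 0]) = r := by
    rw [hrdef]
    simp [en, Matrix.mulVec, dotProduct, Fin.sum_univ_two]
    rfl
  -- pointwise bound
  have hpt : ∀ x : ℝ,
      ‖h ((EuclideanSpace.equiv (Fin 2) ℝ).symm (A.mulVec ![x, 1]))‖ ≤
        (Cs / (1 + 1 / r) ^ j) * (1 + (r * x + s / r) ^ 2)⁻¹ := by
    intro x
    set V := (EuclideanSpace.equiv (Fin 2) ℝ).symm (A.mulVec ![x, 1]) with hV
    have hnorm : ‖V‖ = Real.sqrt ((a * x + c) ^ 2 + (b * x + d) ^ 2) := by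
      rw [EuclideanSpace.norm_eq]
      congr 1
      simp [hV, Fin.sum_univ_two, Matrix.mulVec, dotProduct, Real.norm_eq_abs, sq_abs]
      rfl
    set u := ‖V‖ with hu
    have hu0 : 0 ≤ u := norm_nonneg V
    have hu2 : u ^ 2 = (a * x + c) ^ 2 + (b * x + d) ^ 2 := by
      rw [hnorm]
      exact Real.sq_sqrt (by positivity)
    set t := r * x + s / r with htdef
    have hrt : r * t = (a ^ 2 + b ^ 2) * x + s := by
      rw [htdef, ← hr2]
      field_simp
    have key : r ^ 2 * u ^ 2 = (r * t) ^ 2 + 1 := by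
      rw [hr2, hu2, hrt, hsdef]
      linear_combination (a * d - c * b + 1) * hdet
    have ht2 : u ^ 2 = t ^ 2 + (1 / r) ^ 2 := by
      have hrne : r ≠ 0 := hr.ne'
      field_simp
      linear_combination key
    have habs : |t| ≤ u := by
      rw [← Real.sqrt_sq_eq_abs, ← Real.sqrt_sq hu0]
      exact Real.sqrt_le_sqrt (by nlinarith [sq_nonneg (1 / r)])
    have hdle : 1 / r ≤ u := by
      rw [← Real.sqrt_sq (by positivity : (0:ℝ) ≤ 1 / r), ← Real.sqrt_sq hu0]
      exact Real.sqrt_le_sqrt (by nlinarith [sq_nonneg t])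
    have key2 : (1 + 1 / r) * (1 + |t|) ≤ (1 + u) ^ 2 := by
      nlinarith [habs, hdle, ht2, abs_nonneg t, sq_abs t, sq_nonneg (|t| - 1 / r), hr,
        one_div_pos.2 hr]
    have hpow : (1 + 1 / r) ^ j * (1 + t ^ 2) ≤ (1 + u) ^ (2 * j) := by
      have h1 : ((1 + 1 / r) * (1 + |t|)) ^ j ≤ ((1 + u) ^ 2) ^ j :=
        pow_le_pow_left₀ (by positivity) key2 j
      have h2 : 1 + t ^ 2 ≤ (1 + |t|) ^ 2 := by nlinarith [abs_nonneg t, sq_abs t]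
      have h3 : (1 + |t|) ^ 2 ≤ (1 + |t|) ^ j :=
        pow_le_pow_right₀ (by simp [abs_nonneg t]) hj2
      calc (1 + 1 / r) ^ j * (1 + t ^ 2)
          ≤ (1 + 1 / r) ^ j * (1 + |t|) ^ j := by
            refine mul_le_mul_of_nonneg_left (h2.trans h3) (by positivity)
        _ = ((1 + 1 / r) * (1 + |t|)) ^ j := (mul_pow _ _ _).symm
        _ ≤ ((1 + u) ^ 2) ^ j := h1
        _ = (1 + u) ^ (2 * j) := by rw [← pow_mul]
    have hS := SchwartzMap.one_add_le_sup_seminorm_apply (𝕜 := ℝ) (m := (2 * j, 0))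
      le_rfl le_rfl h V
    rw [norm_iteratedFDeriv_zero] at hS
    have hfin : ‖h V‖ * ((1 + 1 / r) ^ j * (1 + t ^ 2)) ≤ Cs := by
      calc ‖h V‖ * ((1 + 1 / r) ^ j * (1 + t ^ 2))
          ≤ ‖h V‖ * (1 + u) ^ (2 * j) :=
            mul_le_mul_of_nonneg_left hpow (norm_nonneg _)
        _ = (1 + ‖V‖) ^ (2 * j) * ‖h V‖ := by rw [mul_comm]
        _ ≤ Cs := hS
    have hPQ : 0 < (1 + 1 / r) ^ j * (1 + t ^ 2) := by positivity
    have hle : ‖h V‖ ≤ Cs / ((1 + 1 / r) ^ j * (1 + t ^ 2)) := (le_div_iff₀ hPQ).2 hfin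
    calc ‖h V‖ ≤ Cs / ((1 + 1 / r) ^ j * (1 + t ^ 2)) := hle
      _ = Cs / (1 + 1 / r) ^ j * (1 + t ^ 2)⁻¹ := by
          rw [div_mul_eq_div_div, div_eq_mul_inv]
  set D := Cs / (1 + 1 / r) ^ j with hDdef
  have hD0 : 0 ≤ D := by positivity
  have hint : Integrable (fun x : ℝ => D * (1 + (r * x + s / r) ^ 2)⁻¹) :=
    (aux_integrable r (s / r) hr.ne').const_mul D
  have hnn : 0 ≤ᵐ[volume] fun x : ℝ => D * (1 + (r * x + s / r) ^ 2)⁻¹ :=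
    Filter.Eventually.of_forall fun x => by positivity
  have hval : ∫ x : ℝ, D * (1 + (r * x + s / r) ^ 2)⁻¹ = D * (π / r) := by
    rw [integral_const_mul, aux_integral r (s / r) hr]
  have hfinal : D * (π / r) ≤ π * Cs * r ^ m := by
    rcases le_total 1 r with h1 | h1
    · have hrm : 1 ≤ r ^ m := Real.one_le_rpow h1 (by linarith)
      have hD1 : D ≤ Cs := by
        rw [hDdef]
        apply div_le_self hCs0
        exact one_le_pow₀ (le_add_of_nonneg_right (by positivity))
      have h2 : π / r ≤ π := div_le_self pi_pos.le h1
      calc D * (π / r) ≤ Cs * π := mul_le_mul hD1 h2 (by positivity) hCs0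
        _ = π * Cs * 1 := by ring
        _ ≤ π * Cs * r ^ m :=
            mul_le_mul_of_nonneg_left hrm (mul_nonneg pi_pos.le hCs0)
    · have hD1 : D ≤ Cs * r ^ j := by
        rw [hDdef]
        have h2 : (1 / r) ^ j ≤ (1 + 1 / r) ^ j :=
          pow_le_pow_left₀ (by positivity) (by linarith [one_div_pos.2 hr]) j
        calc Cs / (1 + 1 / r) ^ j ≤ Cs / (1 / r) ^ j := by
              apply div_le_div_of_nonneg_left hCs0 (by positivity) h2
          _ = Cs * r ^ j := by
              rw [one_div, inv_pow, div_eq_mul_inv, inv_inv]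
      have hexp : r ^ (j - 1 : ℕ) ≤ r ^ m := by
        rw [← Real.rpow_natCast r (j - 1)]
        apply Real.rpow_le_rpow_of_exponent_ge hr h1
        rw [Nat.cast_sub (by omega : 1 ≤ j)]
        push_cast
        linarith [Nat.le_ceil m]
      have heq : Cs * r ^ j * (π / r) = π * Cs * r ^ (j - 1 : ℕ) := by
        rw [show j = (j - 1) + 1 by omega, pow_succ]
        field_simp
        rw [Nat.add_sub_cancel]
      calc D * (π / r) ≤ Cs * r ^ j * (π / r) :=
            mul_le_mul_of_nonneg_right hD1 (by positivity)
        _ = π * Cs * r ^ (j - 1 : ℕ) := heq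
        _ ≤ π * Cs * r ^ m := by
            apply mul_le_mul_of_nonneg_left hexp (by positivity)
  clear_value j Cs A a b c d r s D
  calc (∫⁻ x : ℝ, ENNReal.ofReal
          ‖h ((EuclideanSpace.equiv (Fin 2) ℝ).symm (A.mulVec ![x, 1]))‖)
      ≤ ∫⁻ x : ℝ, ENNReal.ofReal (D * (1 + (r * x + s / r) ^ 2)⁻¹) :=
        lintegral_mono fun x => ENNReal.ofReal_le_ofReal (hpt x)
    _ = ENNReal.ofReal (∫ x : ℝ, D * (1 + (r * x + s / r) ^ 2)⁻¹) :=
        (ofReal_integral_eq_lintegral_ofReal hint hnn).symm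
    _ ≤ ENNReal.ofReal (π * Cs * en (A.mulVec ![1, 0]) ^ m) := by
        apply ENNReal.ofReal_le_ofReal
        rw [hval, hen]
        exact hfinal
end
end
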